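/- Consider a finite nonempty codebook C, a finite set Y of channel outputs, and a channel given by conditional probabilities W(y|x) ≥ 0 with Σ_{y∈Y} W(y|x) = 1 for every x ∈ C, with the transmitted codeword uniformly distributed over C. Fix a maximum-likelihood decoder d : Y → C, i.e. W(y|d(y)) = max_{x∈C} W(y|x) for all y. For an acceptance region A ⊆ Y define the undetected error probability P_ue(A) = (1/|C|) Σ_{y∈A} Σ_{x∈C, x≠d(y)} W(y|x) and the total error probability P_tot(A) = P_ue(A) + (1/|C|) Σ_{y∉A} Σ_{x∈C} W(y|x). For a threshold t > 0 let A_t = { y ∈ Y : W(y|d(y)) ≥ t · Σ_{x∈C, x≠d(y)} W(y|x) } be Forney's threshold test. Then the threshold test is optimal in the sense that for every acceptance region A ⊆ Y with P_tot(A) ≤ P_tot(A_t), one has P_ue(A) ≥ P_ue(A_t). -/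

import Mathlib

open Finset

/-- Undetected error probability of an acceptance region `A`:
`P_ue(A) = (1/|C|) Σ_{y∈A} Σ_{x∈C, x≠d(y)} W(y|x)`. -/
noncomputable def Pue {C Y : Type*} [Fintype C] [DecidableEq C]
    (W : C → Y → ℝ) (d : Y → C) (A : Finset Y) : ℝ :=
  (1 / (Fintype.card C : ℝ)) *
    ∑ y ∈ A, ∑ x ∈ Finset.univ.filter (fun x => x ≠ d y), W x y

/-- Total error probability of an acceptance region `A`:
`P_tot(A) = P_ue(A) + (1/|C|) Σ_{y∉A} Σ_{x∈C} W(y|x)`. -/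
noncomputable def Ptot {C Y : Type*} [Fintype C] [DecidableEq C] [Fintype Y] [DecidableEq Y]
    (W : C → Y → ℝ) (d : Y → C) (A : Finset Y) : ℝ :=
  Pue W d A + (1 / (Fintype.card C : ℝ)) * ∑ y ∈ Aᶜ, ∑ x : C, W x y

/-- Forney's threshold test acceptance region with threshold `t`:
`A_t = { y : W(y|d(y)) ≥ t · Σ_{x≠d(y)} W(y|x) }`. -/
noncomputable def forneyRegion {C Y : Type*} [Fintype C] [DecidableEq C] [Fintype Y]
    (W : C → Y → ℝ) (d : Y → C) (t : ℝ) : Finset Y :=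
  Finset.univ.filter
    (fun y => t * ∑ x ∈ Finset.univ.filter (fun x => x ≠ d y), W x y ≤ W (d y) y)

/-!
Write `a y = Σ_{x ≠ d y} W(y|x)` and `g y = W(y|d y)`. Up to the factor `1/|C|`, the total error
of `A` is the constant `Σ_y (a y + g y)` minus `Σ_{y∈A} g y`, and the undetected error is
`Σ_{y∈A} a y`. So the claim is a Neyman–Pearson statement: `A_t = {t a ≤ g}` minimizes
`Σ_A (t a - g)` over all regions, hence any `A` with `Σ_A g ≥ Σ_{A_t} g` has `Σ_A a ≥ Σ_{A_t} a`.
-/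

section NeymanPearson

variable {ι : Type*} [Fintype ι]

theorem sum_filter_nonpos_le_sum {M : Type*} [AddCommMonoid M] [LinearOrder M]
    [IsOrderedAddMonoid M] (h : ι → M) (A : Finset ι) :
    ∑ i ∈ univ.filter (fun i => h i ≤ 0), h i ≤ ∑ i ∈ A, h i := by
  classical
  set S := univ.filter (fun i => h i ≤ 0)
  calc ∑ i ∈ S, h i ≤ ∑ i ∈ S ∩ A, h i :=
        sum_le_sum_of_subset_of_nonpos' inter_subset_left fun i hi _ => (mem_filter.mp hi).2
    _ ≤ ∑ i ∈ A, h i :=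
        sum_le_sum_of_subset_of_nonneg inter_subset_right fun i hiA hi =>
          le_of_not_ge fun hle => hi (mem_inter.mpr ⟨by simpa [S] using hle, hiA⟩)

theorem sum_le_sum_of_neyman_pearson {𝕜 : Type*} [Field 𝕜] [LinearOrder 𝕜]
    [IsStrictOrderedRing 𝕜] {f g : ι → 𝕜} {t : 𝕜} (ht : 0 < t) (A : Finset ι)
    (hg : ∑ i ∈ univ.filter (fun i => t * f i ≤ g i), g i ≤ ∑ i ∈ A, g i) :
    ∑ i ∈ univ.filter (fun i => t * f i ≤ g i), f i ≤ ∑ i ∈ A, f i := by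
  set S := univ.filter (fun i => t * f i ≤ g i)
  have hS : S = univ.filter (fun i => t * f i - g i ≤ 0) := filter_congr fun i _ => sub_nonpos.symm
  have hmin : ∑ i ∈ S, (t * f i - g i) ≤ ∑ i ∈ A, (t * f i - g i) :=
    hS ▸ sum_filter_nonpos_le_sum (fun i => t * f i - g i) A
  simp only [sum_sub_distrib, ← mul_sum] at hmin
  exact le_of_mul_le_mul_left (by linarith) ht

end NeymanPearson

theorem Ptot_eq {C Y : Type*} [Fintype C] [DecidableEq C] [Fintype Y] [DecidableEq Y]
    (W : C → Y → ℝ) (d : Y → C) (A : Finset Y) :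
    Ptot W d A = 1 / Fintype.card C * (∑ y, ∑ x, W x y - ∑ y ∈ A, W (d y) y) := by
  have hsplit : ∀ y, ∑ x, W x y = W (d y) y + ∑ x ∈ univ.filter (fun x => x ≠ d y), W x y :=
    fun y => by rw [filter_ne', add_sum_erase univ (W · y) (mem_univ _)]
  rw [Ptot, Pue, ← sum_add_sum_compl A fun y => ∑ x, W x y]
  simp only [hsplit, sum_add_distrib]
  ring

theorem forney_threshold_test_optimal_general
    {C Y : Type*} [Fintype C] [DecidableEq C] [Nonempty C]
    [Fintype Y] [DecidableEq Y]
    (W : C → Y → ℝ)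
    (d : Y → C)
    (t : ℝ) (ht : 0 < t)
    (A : Finset Y)
    (hA : Ptot W d A ≤ Ptot W d (forneyRegion W d t)) :
    Pue W d (forneyRegion W d t) ≤ Pue W d A := by
  have hC : (0 : ℝ) < 1 / Fintype.card C := by positivity
  have hcorrect : ∑ y ∈ forneyRegion W d t, W (d y) y ≤ ∑ y ∈ A, W (d y) y := by
    rw [Ptot_eq, Ptot_eq] at hA
    linarith [le_of_mul_le_mul_left hA hC]
  exact mul_le_mul_of_nonneg_left (sum_le_sum_of_neyman_pearson ht A hcorrect) hC.le

/-- **Forney's threshold test is optimal** (Forney 1968): for a discrete channel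
`W` with uniform prior on a finite nonempty codebook `C`, a maximum-likelihood
decoder `d`, and a threshold `t > 0`, every acceptance region `A` whose total
error probability does not exceed that of the threshold-test region `A_t` has
undetected error probability at least that of `A_t`. -/
theorem forney_threshold_test_optimal
    {C Y : Type*} [Fintype C] [DecidableEq C] [Nonempty C]
    [Fintype Y] [DecidableEq Y]
    (W : C → Y → ℝ)
    (hW0 : ∀ x y, 0 ≤ W x y)
    (hW1 : ∀ x, ∑ y : Y, W x y = 1)
    (d : Y → C)
    (hML : ∀ y x, W x y ≤ W (d y) y)
    (t : ℝ) (ht : 0 < t)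
    (A : Finset Y)
    (hA : Ptot W d A ≤ Ptot W d (forneyRegion W d t)) :
    Pue W d (forneyRegion W d t) ≤ Pue W d A :=
  forney_threshold_test_optimal_general W d t ht A hA
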